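/- Consider the second-type surface S₂ (ε = +1) and suppose f(u) = u for all u ∈ J (so 1 − g'(u)² < 0 on J) and β²g(u) + α²u g'(u) ≠ 0 for all u ∈ J. Then S₂ is weighted flat (K_φ ≡ 0 on J) if and only if for all u ∈ J: g''(u)/(g'(u)² − 1) = A₃(u), where A₃(u) = (−2δ(α²u² + β²g(u)²)²(g'(u)² − 1) + α²β²(g(u) − u g'(u))²) / ((α²u² + β²g(u)²)(β²g(u) + α²u g'(u))). (Equivalently, d/du[log|(1 − g'(u))/(1 + g'(u))|] = 2A₃(u) on J.) -/
import Mathlib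


open Real Set

/-- Weighted Gaussian curvature of the timelike general rotational surface `S_i`
(`ε = -1` for the first type, `ε = 1` for the second type) in `E₁⁴` with
density `e^{λ₁x²+λ₂y²+λ₃z²+λ₄t²}`, where `δ = λ₁+λ₂+λ₃−λ₄`. -/
noncomputable def Kphi (α β δ ε : ℝ) (f g : ℝ → ℝ) (u : ℝ) : ℝ :=
  (-2 * δ * (α ^ 2 * (f u) ^ 2 + ε * β ^ 2 * (g u) ^ 2) ^ 2
      * (-ε * (deriv f u) ^ 2 + (deriv g u) ^ 2) ^ 2
    + α ^ 2 * β ^ 2 * (g u * deriv f u - f u * deriv g u) ^ 2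
      * (-ε * (deriv f u) ^ 2 + (deriv g u) ^ 2)
    + (ε * α ^ 2 * (f u) ^ 2 + β ^ 2 * (g u) ^ 2)
      * (β ^ 2 * g u * deriv f u + α ^ 2 * f u * deriv g u)
      * (deriv (deriv f) u * deriv g u - deriv f u * deriv (deriv g) u))
  / ((α ^ 2 * (f u) ^ 2 + ε * β ^ 2 * (g u) ^ 2) ^ 2
      * (-ε * (deriv f u) ^ 2 + (deriv g u) ^ 2) ^ 2)


theorem second_type_f_id_weighted_flat_iff
    (J : Set ℝ) (hJo : IsOpen J) (hJc : J.OrdConnected)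
    (f g : ℝ → ℝ) (hfu : ∀ u, f u = u)
    (hg : ContDiffOn ℝ (⊤ : ℕ∞) g J)
    (α β l1 l2 l3 l4 δ : ℝ) (hα : 0 < α) (hβ : 0 < β)
    (hl : ¬(l1 = 0 ∧ l2 = 0 ∧ l3 = 0 ∧ l4 = 0)) (hδ : δ = l1 + l2 + l3 - l4)
    (hreg : ∀ u ∈ J, (deriv f u) ^ 2 - (deriv g u) ^ 2 < 0
        ∧ 0 < α ^ 2 * (f u) ^ 2 + β ^ 2 * (g u) ^ 2)
    (hden : ∀ u ∈ J, β ^ 2 * g u + α ^ 2 * u * deriv g u ≠ 0) :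
    (∀ u ∈ J, Kphi α β δ 1 f g u = 0) ↔
      (∀ u ∈ J, deriv (deriv g) u / ((deriv g u) ^ 2 - 1)
        = (-2 * δ * (α ^ 2 * u ^ 2 + β ^ 2 * (g u) ^ 2) ^ 2 * ((deriv g u) ^ 2 - 1)
            + α ^ 2 * β ^ 2 * (g u - u * deriv g u) ^ 2)
          / ((α ^ 2 * u ^ 2 + β ^ 2 * (g u) ^ 2) * (β ^ 2 * g u + α ^ 2 * u * deriv g u))) := by

  have hf : f = id := funext hfu
  have hf1 : deriv f = fun _ => (1 : ℝ) := by
    funext x; rw [hf]; simp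
  have hf2 : deriv (deriv f) = fun _ => (0 : ℝ) := by
    rw [hf1]; funext x; simp
  apply forall₂_congr
  intro u hu
  obtain ⟨h1, h2⟩ := hreg u hu
  rw [hf1] at h1
  rw [hf] at h2
  simp only [id_eq] at h2
  have h1' : (1:ℝ) ^ 2 - deriv g u ^ 2 < 0 := h1
  have hQ : 0 < (deriv g u) ^ 2 - 1 := by nlinarith
  have hP : 0 < α ^ 2 * u ^ 2 + β ^ 2 * (g u) ^ 2 := by simpa using h2
  have hD := hden u hu
  have hKeq : Kphi α β δ 1 f g u =
      (-2 * δ * (α ^ 2 * u ^ 2 + β ^ 2 * (g u) ^ 2) ^ 2 * ((deriv g u) ^ 2 - 1) ^ 2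
        + α ^ 2 * β ^ 2 * (g u - u * deriv g u) ^ 2 * ((deriv g u) ^ 2 - 1)
        - (α ^ 2 * u ^ 2 + β ^ 2 * (g u) ^ 2) * (β ^ 2 * g u + α ^ 2 * u * deriv g u)
          * deriv (deriv g) u)
      / ((α ^ 2 * u ^ 2 + β ^ 2 * (g u) ^ 2) ^ 2 * ((deriv g u) ^ 2 - 1) ^ 2) := by
    unfold Kphi
    rw [hf2, hf1, hf]
    simp only [id_eq]
    ring
  rw [hKeq]
  rw [div_eq_zero_iff]
  have hden2 : (α ^ 2 * u ^ 2 + β ^ 2 * (g u) ^ 2) ^ 2 * ((deriv g u) ^ 2 - 1) ^ 2 ≠ 0 := by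
    positivity
  have hPD : (α ^ 2 * u ^ 2 + β ^ 2 * (g u) ^ 2) * (β ^ 2 * g u + α ^ 2 * u * deriv g u) ≠ 0 :=
    mul_ne_zero hP.ne' hD
  rw [div_eq_div_iff hQ.ne' hPD]
  constructor
  · rintro (h | h)
    · linear_combination -h
    · exact absurd h hden2
  · intro h
    left
    linear_combination -h
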